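/- arXiv:2601.07899 — 5 statements merged into one kernel-verified Lean document; each statement's English description precedes it below -/
import Mathlib

section
/- For rationals s, a, b, the remainder of P_s(x) upon Euclidean division by x^2 + ax + b equals (b^2 + u(s,a)·b + v(s,a))·x + (m(s,a)·b^2 + n(s,a)·b - s^5), where u(s,a) = -3a^2 + (12-4s^2-2s)a + (-s^4+14s^3-4s^2-10s-1), v(s,a) = a^4 + (2s^2+s-6)a^3 + (s^4-14s^3+4s^2+10s+1)a^2 + (s^5+10s^4+4s^3-14s^2+s)a + (-6s^5+s^4+2s^3), m(s,a) = -2a-2s^2-s+6, and n(s,a) = a^3 + (2s^2+s-6)a^2 + (s^4-14s^3+4s^2+10s+1)a + (s^5+10s^4+4s^3-14s^2+s). -/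
noncomputable section
open Polynomial

def uu (s a : ℚ) : ℚ :=
  -3*a^2 + (12 - 4*s^2 - 2*s)*a + (-s^4 + 14*s^3 - 4*s^2 - 10*s - 1)

def vv (s a : ℚ) : ℚ :=
  a^4 + (2*s^2 + s - 6)*a^3 + (s^4 - 14*s^3 + 4*s^2 + 10*s + 1)*a^2
    + (s^5 + 10*s^4 + 4*s^3 - 14*s^2 + s)*a + (-6*s^5 + s^4 + 2*s^3)

def mm (s a : ℚ) : ℚ := -2*a - 2*s^2 - s + 6

def nn (s a : ℚ) : ℚ :=
  a^3 + (2*s^2 + s - 6)*a^2 + (s^4 - 14*s^3 + 4*s^2 + 10*s + 1)*a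
    + (s^5 + 10*s^4 + 4*s^3 - 14*s^2 + s)

def LL (s a : ℚ) : ℚ := nn s a - mm s a * uu s a

def CC (s a : ℚ) : ℚ := mm s a * vv s a + s^5

def FF (s a : ℚ) : ℚ :=
  CC s a ^ 2 + uu s a * LL s a * CC s a + vv s a * LL s a ^ 2

def Ppoly (s : ℚ) : Polynomial ℚ :=
  X^5 + C ((2 + s) * (3 - 2*s)) * X^4
    + C (1 + 10*s + 4*s^2 - 14*s^3 + s^4) * X^3
    - C (s * (1 - 14*s + 4*s^2 + 10*s^3 + s^4)) * X^2
    - C (s^3 * (1 + 2*s) * (-2 + 3*s)) * X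
    - C (s^5)

namespace Polynomial

variable {R : Type*} [Ring R]

theorem monic_X_sq_add_C_mul_X_add_C (a b : R) : (X ^ 2 + C a * X + C b).Monic := by
  simpa only [add_assoc] using monic_X_pow_add (n := 2) degree_linear_lt

theorem degree_X_sq_add_C_mul_X_add_C [Nontrivial R] (a b : R) :
    (X ^ 2 + C a * X + C b).degree = 2 := by
  compute_degree!

theorem modByMonic_X_sq_add_C_mul_X_add_C_eq [Nontrivial R] {f q : R[X]} {a b r₁ r₀ : R}
    (h : f = (X ^ 2 + C a * X + C b) * q + (C r₁ * X + C r₀)) :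
    f %ₘ (X ^ 2 + C a * X + C b) = C r₁ * X + C r₀ :=
  (div_modByMonic_unique q _ (monic_X_sq_add_C_mul_X_add_C a b)
    ⟨by rw [h, add_comm], by rw [degree_X_sq_add_C_mul_X_add_C]; exact degree_linear_lt⟩).2

end Polynomial

-- Coefficients obtained by synthetic division of `Ppoly s` by `X ^ 2 + C a * X + C b`.
def PpolyQuot (s a b : ℚ) : ℚ[X] :=
  let q₃ := (2 + s) * (3 - 2*s) - a
  let q₂ := (1 + 10*s + 4*s^2 - 14*s^3 + s^4) - a * q₃ - b
  let q₁ := -(s * (1 - 14*s + 4*s^2 + 10*s^3 + s^4)) - a * q₂ - b * q₃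
  X^3 + C q₃ * X^2 + C q₂ * X + C q₁

theorem Ppoly_eq_mul_PpolyQuot_add (s a b : ℚ) :
    Ppoly s = (X^2 + C a * X + C b) * PpolyQuot s a b
      + (C (b^2 + uu s a * b + vv s a) * X + C (mm s a * b^2 + nn s a * b - s^5)) := by
  simp only [Ppoly, PpolyQuot, uu, vv, mm, nn, map_add, map_mul, map_sub, map_neg,
    map_pow, map_one, map_ofNat]
  ring

theorem stmt3 (s a b : ℚ) :
    Ppoly s %ₘ (X^2 + C a * X + C b) =
      C (b^2 + uu s a * b + vv s a) * X + C (mm s a * b^2 + nn s a * b - s^5) :=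
  modByMonic_X_sq_add_C_mul_X_add_C_eq (Ppoly_eq_mul_PpolyQuot_add s a b)
end
end

section
/- With a = 2, the one-variable polynomials L(s,2) and C(s,2) in ℚ[s] satisfy gcd(L(s,2), C(s,2)) = s^3 - s^2 - s + 1 = (s-1)^2(s+1) (up to a unit), so the common rational roots of L(s,2) and C(s,2) are exactly s = 1 and s = -1. -/
noncomputable section
open Polynomial

def uP (a : ℚ) : Polynomial ℚ :=
  C (-3*a^2) + (12 - 4*X^2 - 2*X) * C a + (-X^4 + 14*X^3 - 4*X^2 - 10*X - 1)

def vP (a : ℚ) : Polynomial ℚ :=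
  C (a^4) + (2*X^2 + X - 6) * C (a^3) + (X^4 - 14*X^3 + 4*X^2 + 10*X + 1) * C (a^2)
    + (X^5 + 10*X^4 + 4*X^3 - 14*X^2 + X) * C a + (-6*X^5 + X^4 + 2*X^3)

def mP (a : ℚ) : Polynomial ℚ := C (-2*a) - 2*X^2 - X + 6

def nP (a : ℚ) : Polynomial ℚ :=
  C (a^3) + (2*X^2 + X - 6) * C (a^2) + (X^4 - 14*X^3 + 4*X^2 + 10*X + 1) * C a
    + (X^5 + 10*X^4 + 4*X^3 - 14*X^2 + X)

def LP (a : ℚ) : Polynomial ℚ := nP a - mP a * uP a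
def CP (a : ℚ) : Polynomial ℚ := mP a * vP a + X^5

lemma hLfac : LP 2 = (X^3 - X^2 - X + 1) * (-2*X^3 + 26*X^2 + 28*X - 36) := by
  unfold LP nP mP uP
  norm_num [map_ofNat]
  ring

lemma hCfac : CP 2 = (X^3 - X^2 - X + 1) * (8*X^4 - 38*X^3 + 30*X^2 + 72*X - 56) := by
  unfold CP mP vP
  norm_num [map_ofNat]
  ring

lemma hBez : (-238524*X^3 + 940961*X^2 - 115448*X - 2359988) * LP 2
    + (-59631*X^2 + 727196*X + 1425646) * CP 2
    = (5123392 : Polynomial ℚ) * (X^3 - X^2 - X + 1) := by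
  rw [hLfac, hCfac]; ring

theorem stmt10 :
    Associated (EuclideanDomain.gcd (LP 2) (CP 2)) (X^3 - X^2 - X + 1 : Polynomial ℚ) ∧
    (X^3 - X^2 - X + 1 : Polynomial ℚ) = (X - 1)^2 * (X + 1) ∧
    (∀ x : ℚ, ((LP 2).eval x = 0 ∧ (CP 2).eval x = 0) ↔ (x = 1 ∨ x = -1)) := by
  set g : Polynomial ℚ := X^3 - X^2 - X + 1 with hg
  have hgL : g ∣ LP 2 := ⟨_, hLfac⟩
  have hgC : g ∣ CP 2 := ⟨_, hCfac⟩
  have hd : EuclideanDomain.gcd (LP 2) (CP 2) ∣ (5123392 : Polynomial ℚ) * g := by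
    rw [← hBez]
    exact dvd_add ((EuclideanDomain.gcd_dvd_left _ _).mul_left _)
      ((EuclideanDomain.gcd_dvd_right _ _).mul_left _)
  have hunit : (5123392 : Polynomial ℚ) * g ∣ g := by
    refine ⟨C (1/5123392 : ℚ), ?_⟩
    rw [mul_comm, ← mul_assoc,
      show (C (1/5123392 : ℚ)) * (5123392 : Polynomial ℚ) = 1 by
        rw [show (5123392 : Polynomial ℚ) = C (5123392 : ℚ) from (map_ofNat C 5123392).symm, ← C_mul]
        norm_num,
      one_mul]
  have h1 : EuclideanDomain.gcd (LP 2) (CP 2) ∣ g := hd.trans hunit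
  have h2 : g ∣ EuclideanDomain.gcd (LP 2) (CP 2) := EuclideanDomain.dvd_gcd hgL hgC
  refine ⟨associated_of_dvd_dvd h1 h2, by rw [hg]; ring, fun x => ?_⟩
  constructor
  · rintro ⟨hLx, hCx⟩
    have hcomb := congrArg (eval x) hBez
    simp only [eval_add, eval_mul, hLx, hCx, mul_zero, zero_add] at hcomb
    have hx : (x - 1)^2 * (x + 1) = 0 := by
      simp only [hg, eval_mul, eval_add, eval_sub, eval_pow, eval_X, eval_one,
        eval_ofNat] at hcomb
      nlinarith [hcomb]
    rcases mul_eq_zero.mp hx with h | h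
    · left; have := pow_eq_zero_iff (n := 2) (by norm_num) |>.mp h; linarith
    · right; linarith
  · rintro (rfl | rfl) <;>
      constructor <;>
      simp [hLfac, hCfac, eval_mul, eval_add, eval_sub, eval_pow] <;> norm_num
end
end

section
/- If s and a are rational numbers with L(s,a) = 0 and C(s,a) = 0, then s ∈ {1, -1} and a = 2. -/
noncomputable section
open Polynomial

/-!
Eliminating `a` between `L = 0` and `C = 0` (their resultant in `a`, up to a constant) leaves
`(s - 1)^3 (s + 1)^3 K(s) = 0` with `K ∈ ℤ[X]` of degree 21. `K` has no rational root: by the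
rational root theorem the denominator of a root divides the leading coefficient `2^15`, so it is
invertible mod 13, and the root would reduce to a root of `K` in `𝔽₁₃`, where there is none.
Finally `L(1, a) = -(a - 2)(5a² - 8a + 4)` and `L(-1, a) = -5(a - 2)³` force `a = 2`.
-/

theorem Polynomial.exists_isRoot_map_of_aeval_eq_zero {A K F : Type*} [CommRing A] [IsDomain A]
    [UniqueFactorizationMonoid A] [Field K] [Algebra A K] [IsFractionRing A K] [Field F]
    (φ : A →+* F) {f : A[X]} (hf : φ f.leadingCoeff ≠ 0) {r : K} (hr : aeval r f = 0) :
    ∃ x, (f.map φ).IsRoot x := by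
  open IsFractionRing in
  have hden : φ (den A r) ≠ 0 := fun h0 =>
    hf (zero_dvd_iff.mp (h0 ▸ _root_.map_dvd φ (den_dvd_of_is_root hr)))
  have hnum : (f.map φ).scaleRoots (φ (den A r)) |>.IsRoot (φ (num A r)) := by
    rw [← map_scaleRoots _ _ _ hf]
    exact (num_isRoot_scaleRoots_of_aeval_eq_zero hr).map
  refine ⟨φ (num A r) / φ (den A r), ?_⟩
  rw [IsRoot, ← mul_div_cancel₀ (φ (num A r)) hden, scaleRoots_eval_mul] at hnum
  exact (mul_eq_zero.mp hnum).resolve_left (pow_ne_zero _ hden)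

def resultantFactor : ℤ[X] :=
  32768 * X ^ 21 - 1573888 * X ^ 20 + 17845256 * X ^ 19 - 25552432 * X ^ 18
    - 164061982 * X ^ 17 + 516056006 * X ^ 16 + 96206522 * X ^ 15 - 2381234573 * X ^ 14
    + 3001419440 * X ^ 13 + 2266872188 * X ^ 12 - 8848608460 * X ^ 11 + 6526416706 * X ^ 10
    + 3706299882 * X ^ 9 - 9219354518 * X ^ 8 + 5021608234 * X ^ 7 + 1048464803 * X ^ 6
    - 2603612444 * X ^ 5 + 1276740780 * X ^ 4 - 231674112 * X ^ 3 - 7745280 * X ^ 2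
    + 5345280 * X + 110592

lemma natDegree_resultantFactor : resultantFactor.natDegree = 21 := by
  unfold resultantFactor
  compute_degree!

lemma leadingCoeff_resultantFactor : resultantFactor.leadingCoeff = 32768 := by
  rw [leadingCoeff, natDegree_resultantFactor]
  simp [resultantFactor, coeff_X_pow, coeff_X]

lemma not_isRoot_map_resultantFactor_zmod13 (x : ZMod 13) :
    ¬ (resultantFactor.map (Int.castRingHom (ZMod 13))).IsRoot x := by
  simp only [resultantFactor, IsRoot, eval_map, eval₂_add, eval₂_sub, eval₂_mul, eval₂_pow,
    eval₂_X, eval₂_ofNat]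
  revert x
  decide

lemma aeval_resultantFactor_ne_zero (r : ℚ) : aeval r resultantFactor ≠ 0 := by
  intro hr
  have hlead : Int.castRingHom (ZMod 13) resultantFactor.leadingCoeff ≠ 0 := by
    rw [leadingCoeff_resultantFactor]
    decide
  have : Fact (Nat.Prime 13) := ⟨by norm_num⟩
  obtain ⟨x, hx⟩ := exists_isRoot_map_of_aeval_eq_zero (Int.castRingHom (ZMod 13)) hlead hr
  exact not_isRoot_map_resultantFactor_zmod13 x hx

lemma resultant_LL_CC_eq_zero {s a : ℚ} (hL : LL s a = 0) (hC : CC s a = 0) :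
    (s - 1) ^ 3 * (s + 1) ^ 3 * aeval s resultantFactor = 0 := by
  simp only [LL, _root_.CC, nn, mm, uu, vv] at hL hC
  simp only [resultantFactor, aeval_def, eval₂_add, eval₂_sub, eval₂_mul, eval₂_pow, eval₂_X,
    eval₂_ofNat]
  linear_combination
    (((-1536 * s ^ 15 + 124424 * s ^ 14 + 664104 * s ^ 13 + 202050 * s ^ 12 - 9573896 * s ^ 11
        + 6812528 * s ^ 10 + 30597184 * s ^ 9 - 37390260 * s ^ 8 - 34115840 * s ^ 7
        + 69780912 * s ^ 6 - 278760 * s ^ 5 - 53893758 * s ^ 4 + 24414344 * s ^ 3 + 11862472 * s ^ 2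
        - 11705344 * s + 2501888) * a ^ 4
      + (-3072 * s ^ 17 + 271632 * s ^ 16 + 3318492 * s ^ 15 + 532624 * s ^ 14 - 40464285 * s ^ 13
          + 4946344 * s ^ 12 + 200073304 * s ^ 11 - 116970824 * s ^ 10 - 466586382 * s ^ 9
          + 477891576 * s ^ 8 + 469901240 * s ^ 7 - 798670872 * s ^ 6 - 47623101 * s ^ 5
          + 579412368 * s ^ 4 - 228902788 * s ^ 3 - 125109232 * s ^ 2 + 110285952 * s
          - 22304256) * a ^ 3
      + (-1536 * s ^ 19 + 178440 * s ^ 18 + 2627772 * s ^ 17 - 2433654 * s ^ 16 - 55201675 * s ^ 15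
          + 95306305 * s ^ 14 + 184050141 * s ^ 13 - 398743198 * s ^ 12 - 327770466 * s ^ 11
          + 824234134 * s ^ 10 + 512560742 * s ^ 9 - 1320923550 * s ^ 8 - 469190143 * s ^ 7
          + 1628968193 * s ^ 6 - 118432927 * s ^ 5 - 1108982390 * s ^ 4 + 494149260 * s ^ 3
          + 236763336 * s ^ 2 - 222790784 * s + 45632768) * a ^ 2
      + (-1536 * s ^ 20 + 1321224 * s ^ 19 - 14245764 * s ^ 18 + 3767886 * s ^ 17
          + 143018985 * s ^ 16 - 138516118 * s ^ 15 - 566293303 * s ^ 14 + 754552562 * s ^ 13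
          + 1217494318 * s ^ 12 - 2260201844 * s ^ 11 - 1008677338 * s ^ 10 + 3592374186 * s ^ 9
          - 598964627 * s ^ 8 - 2731304726 * s ^ 7 + 1512582453 * s ^ 6 + 734234598 * s ^ 5
          - 774006692 * s ^ 4 + 57228872 * s ^ 3 + 92682112 * s ^ 2 - 13456128 * s - 3588096) * a
      + (-262144 * s ^ 21 + 8930304 * s ^ 20 - 20907120 * s ^ 19 - 52574976 * s ^ 18
          + 243054372 * s ^ 17 - 142322740 * s ^ 16 - 766706044 * s ^ 15 + 1622434824 * s ^ 14
          - 120054984 * s ^ 13 - 3418089976 * s ^ 12 + 3772633400 * s ^ 11 + 1477773152 * s ^ 10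
          - 5604884172 * s ^ 9 + 2733131756 * s ^ 8 + 2354939572 * s ^ 7 - 3054983432 * s ^ 6
          + 671676016 * s ^ 5 + 691505376 * s ^ 4 - 518184448 * s ^ 3 + 134490112 * s ^ 2
          - 11304960 * s - 294912)) * hL
    + ((3840 * s ^ 15 - 311060 * s ^ 14 - 1660260 * s ^ 13 - 505125 * s ^ 12 + 23934740 * s ^ 11
        - 17031320 * s ^ 10 - 76492960 * s ^ 9 + 93475650 * s ^ 8 + 85289600 * s ^ 7
        - 174452280 * s ^ 6 + 696900 * s ^ 5 + 134734395 * s ^ 4 - 61035860 * s ^ 3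
        - 29656180 * s ^ 2 + 29263360 * s - 6254720) * a ^ 2
      + (5376 * s ^ 17 - 493596 * s ^ 16 - 7199844 * s ^ 15 - 1090315 * s ^ 14 + 83962938 * s ^ 13
          - 10236715 * s ^ 12 - 406095556 * s ^ 11 + 228633182 * s ^ 10 + 949562172 * s ^ 9
          - 947388282 * s ^ 8 - 969314276 * s ^ 7 + 1601613369 * s ^ 6 + 116513370 * s ^ 5
          - 1169904543 * s ^ 4 + 453731260 * s ^ 3 + 254365780 * s ^ 2 - 221164416 * s
          + 44502144) * a
      + (1536 * s ^ 19 - 179208 * s ^ 18 - 6332856 * s ^ 17 - 9620178 * s ^ 16 + 93288452 * s ^ 15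
          + 50034984 * s ^ 14 - 517401132 * s ^ 13 - 64889670 * s ^ 12 + 1711213392 * s ^ 11
          - 516697984 * s ^ 10 - 3318701040 * s ^ 9 + 2420905682 * s ^ 8 + 3175908804 * s ^ 7
          - 4014646904 * s ^ 6 - 703401260 * s ^ 5 + 2838860262 * s ^ 4 - 900153624 * s ^ 3
          - 616249032 * s ^ 2 + 465577216 * s - 87518464)) * hC) / 16

lemma LL_one (a : ℚ) : LL 1 a = -(a - 2) * (5 * a ^ 2 - 8 * a + 4) := by
  unfold LL nn mm uu
  ring

lemma LL_neg_one (a : ℚ) : LL (-1) a = -5 * (a - 2) ^ 3 := by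
  unfold LL nn mm uu
  ring

theorem stmt12 (s a : ℚ) (hL : LL s a = 0) (hC : CC s a = 0) :
    (s = 1 ∨ s = -1) ∧ a = 2 := by
  have hs : s = 1 ∨ s = -1 := by
    simpa only [mul_eq_zero, pow_eq_zero_iff three_ne_zero, aeval_resultantFactor_ne_zero,
      or_false, sub_eq_zero, add_eq_zero_iff_eq_neg] using resultant_LL_CC_eq_zero hL hC
  refine ⟨hs, ?_⟩
  rcases hs with rfl | rfl
  · rw [LL_one, mul_eq_zero, neg_eq_zero, sub_eq_zero] at hL
    refine hL.resolve_right fun hq => ?_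
    nlinarith [sq_nonneg (5 * a - 4)]
  · rw [LL_neg_one, mul_eq_zero, pow_eq_zero_iff three_ne_zero, sub_eq_zero] at hL
    exact hL.resolve_left (by norm_num)
end
end

section
/- If s is a rational number such that F(s,a) has no rational root a and the system L(s,a) = C(s,a) = 0 has no rational solution a, then the quintic P_s(x) has no monic quadratic factor x^2 + ax + b with a, b ∈ ℚ. -/
/-!
Dividing `P_s` by `x² + a x + b` leaves the remainder `r₁ x + r₀` with `r₁ = b² + u b + v` and
`r₀ = m r₁ + L b - C`. A quadratic factor forces `r₁ = r₀ = 0`, hence `L b = C`. If `L = 0` then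
also `C = 0`; otherwise substituting `C = L b` gives `F = L² r₁ = 0`, a rational root of `F`.
-/

noncomputable section
open Polynomial

theorem Polynomial.linear_eq_zero_of_quadratic_dvd {R : Type*} [CommRing R] [IsDomain R]
    {a b r₁ r₀ : R} (h : (X ^ 2 + C a * X + C b) ∣ C r₁ * X + C r₀) : r₁ = 0 ∧ r₀ = 0 := by
  have hdeg : (X ^ 2 + C a * X + C b : R[X]).degree = 2 := by
    simpa using degree_quadratic (a := (1 : R)) (b := a) (c := b) one_ne_zero
  have hzero : C r₁ * X + C r₀ = 0 :=
    eq_zero_of_dvd_of_degree_lt h (hdeg ▸ degree_linear_lt)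
  constructor
  · simpa using congrArg (coeff · 1) hzero
  · simpa using congrArg (coeff · 0) hzero

theorem Polynomial.linear_eq_zero_of_quadratic_dvd_mul_add {R : Type*} [CommRing R] [IsDomain R]
    {a b r₁ r₀ : R} {q : R[X]}
    (h : (X ^ 2 + C a * X + C b) ∣ (X ^ 2 + C a * X + C b) * q + (C r₁ * X + C r₀)) :
    r₁ = 0 ∧ r₀ = 0 :=
  linear_eq_zero_of_quadratic_dvd <| (dvd_add_right (dvd_mul_right _ _)).mp h

def remX (s a b : ℚ) : ℚ := b ^ 2 + uu s a * b + vv s a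

def remC (s a b : ℚ) : ℚ := mm s a * remX s a b + LL s a * b - CC s a

theorem Ppoly_eq_quadratic_mul_add_rem (s a b : ℚ) :
    ∃ q : ℚ[X], Ppoly s = (X ^ 2 + C a * X + C b) * q + (C (remX s a b) * X + C (remC s a b)) := by
  set q₂ := (2 + s) * (3 - 2 * s) - a
  set q₁ := (1 + 10 * s + 4 * s ^ 2 - 14 * s ^ 3 + s ^ 4) - a * q₂ - b
  set q₀ := -(s * (1 - 14 * s + 4 * s ^ 2 + 10 * s ^ 3 + s ^ 4)) - a * q₁ - b * q₂
  refine ⟨X ^ 3 + C q₂ * X ^ 2 + C q₁ * X + C q₀, ?_⟩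
  simp only [Ppoly, remC, remX, q₀, q₁, q₂, LL, _root_.CC, uu, vv, mm, nn, map_add, map_sub,
    map_mul, map_pow, map_neg, map_one, map_ofNat]
  ring

theorem FF_eq_of_LL_mul_eq_CC {s a b : ℚ} (h : LL s a * b = CC s a) :
    FF s a = LL s a ^ 2 * remX s a b := by
  rw [FF, remX, ← h]
  ring

theorem stmt17 (s : ℚ)
    (hF : ∀ a : ℚ, FF s a ≠ 0)
    (hLC : ∀ a : ℚ, ¬(LL s a = 0 ∧ CC s a = 0)) :
    ¬ ∃ a b : ℚ, (X^2 + C a * X + C b) ∣ Ppoly s := by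
  rintro ⟨a, b, hdvd⟩
  obtain ⟨q, hP⟩ := Ppoly_eq_quadratic_mul_add_rem s a b
  obtain ⟨hX, hC⟩ := linear_eq_zero_of_quadratic_dvd_mul_add (hP ▸ hdvd)
  have hLb : LL s a * b = CC s a := by
    rw [remC, hX] at hC
    linear_combination hC
  by_cases hL : LL s a = 0
  · exact hLC a ⟨hL, by rw [← hLb, hL, zero_mul]⟩
  · exact hF a (by rw [FF_eq_of_LL_mul_eq_CC hLb, hX, mul_zero])
end
end

section
/- For every rational s and rationals a, b, if x^2 + ax + b divides P_s(x) in ℚ[x], then b^2 + u(s,a)·b + v(s,a) = 0, and if additionally L(s,a) ≠ 0, then F(s,a) = 0; consequently, for each fixed rational s with L(s,a) ≠ 0 for all rational roots candidates, the quadratic-factor locus of P_s embeds into the affine rational points of the curve F(s,a) = 0. -/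
/-! Dividing `P_s` by `X² + aX + b` leaves the linear remainder `Q·X + (L·b - C + m·Q)`, where
`Q = b² + u·b + v`; a divisor forces both coefficients to vanish, i.e. `Q = 0` and `L·b = C`.
Then `F = L²·Q - (L·b - C)(L·b + C + u·L)` vanishes as well: `F(s, a) = 0` is the homogenised
quadratic `Q` evaluated at `(C, L)` instead of `(b, 1)`. -/

noncomputable section
open Polynomial

namespace Polynomial

variable {R : Type*} [CommRing R] [IsDomain R]

theorem eq_zero_of_quadratic_dvd_linear {a b r t : R}
    (h : X ^ 2 + C a * X + C b ∣ C r * X + C t) : r = 0 ∧ t = 0 := by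
  have hdeg : (X ^ 2 + C a * X + C b : R[X]).degree = 2 := by compute_degree!
  have hzero : C r * X + C t = 0 :=
    eq_zero_of_dvd_of_degree_lt h (hdeg ▸ degree_linear_le.trans_lt (by norm_num))
  exact ⟨by simpa using congrArg (coeff · 1) hzero, by simpa using congrArg (coeff · 0) hzero⟩

end Polynomial

theorem sq_add_mul_add_mul_sq_eq_zero {R : Type*} [CommRing R] {u v b l c : R}
    (hb : b ^ 2 + u * b + v = 0) (hc : l * b = c) : c ^ 2 + u * l * c + v * l ^ 2 = 0 := by
  linear_combination l ^ 2 * hb - (l * b + c + u * l) * hc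

def ppolyQuot (s a b : ℚ) : ℚ[X] :=
  let c2 := (2 + s) * (3 - 2*s) - a
  let c1 := (1 + 10*s + 4*s^2 - 14*s^3 + s^4) - b - a * c2
  let c0 := -(s * (1 - 14*s + 4*s^2 + 10*s^3 + s^4)) - a * c1 - b * c2
  X^3 + C c2 * X^2 + C c1 * X + C c0

theorem ppoly_eq_mul_add (s a b : ℚ) :
    Ppoly s = (X^2 + C a * X + C b) * ppolyQuot s a b
      + (C (b^2 + uu s a * b + vv s a) * X
        + C (LL s a * b - CC s a + mm s a * (b^2 + uu s a * b + vv s a))) := by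
  simp only [Ppoly, ppolyQuot, LL, _root_.CC, uu, vv, mm, nn, map_add, map_sub, map_mul, map_pow,
    map_neg, map_one, map_ofNat]
  ring

theorem quadratic_conditions_of_dvd_ppoly {s a b : ℚ} (h : X^2 + C a * X + C b ∣ Ppoly s) :
    b^2 + uu s a * b + vv s a = 0 ∧ LL s a * b = CC s a := by
  rw [ppoly_eq_mul_add s a b, dvd_add_right (dvd_mul_right _ _)] at h
  obtain ⟨hQ, hT⟩ := eq_zero_of_quadratic_dvd_linear h
  exact ⟨hQ, by linear_combination hT - mm s a * hQ⟩

theorem stmt19 (s a b : ℚ)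
    (hdvd : (X^2 + C a * X + C b) ∣ Ppoly s) :
    b^2 + uu s a * b + vv s a = 0 ∧ (LL s a ≠ 0 → FF s a = 0) := by
  obtain ⟨hQ, hT⟩ := quadratic_conditions_of_dvd_ppoly hdvd
  exact ⟨hQ, fun _ => sq_add_mul_add_mul_sq_eq_zero hQ hT⟩
end
end
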